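/- Let D = μ_1 I_{n_1} ⊕ … ⊕ μ_k I_{n_k} with μ_1 > … > μ_k ≥ 0 and let U be an n×n unitary matrix such that for each t ∈ [k−1], setting p = n_1 + … + n_t: det(U[p]) ≠ 0 and det(U[K,[p]]) = 0 for every K ⊆ [n] with |K| = p and K ≠ [p]. Then U = U_1 ⊕ … ⊕ U_k with each U_i unitary of size n_i, and consequently U D U* = D. -/

import Mathlib

open Matrix Filter Topology
open scoped ComplexOrder

/-- `matAbs X = (Xᴴ X)^{1/2}`, the positive semidefinite part of the polar decomposition. -/
noncomputable def matAbs {n : ℕ} (X : Matrix (Fin n) (Fin n) ℂ) : Matrix (Fin n) (Fin n) ℂ :=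
  ((Matrix.posSemidef_conjTranspose_mul_self X).1.eigenvectorUnitary : Matrix (Fin n) (Fin n) ℂ) *
    diagonal ((↑) ∘ (√·) ∘ (Matrix.posSemidef_conjTranspose_mul_self X).1.eigenvalues) *
    (star (Matrix.posSemidef_conjTranspose_mul_self X).1.eigenvectorUnitary : Matrix (Fin n) (Fin n) ℂ)

/-- The largest singular value (spectral norm). -/
noncomputable def sMax {n : ℕ} (B : Matrix (Fin n) (Fin n) ℂ) : ℝ :=
  ⨆ i, Real.sqrt ((Matrix.posSemidef_conjTranspose_mul_self B).1.eigenvalues i)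

/-- The smallest singular value. -/
noncomputable def sMin {n : ℕ} (B : Matrix (Fin n) (Fin n) ℂ) : ℝ :=
  ⨅ i, Real.sqrt ((Matrix.posSemidef_conjTranspose_mul_self B).1.eigenvalues i)

/-- The spectral radius: the largest modulus of an eigenvalue. -/
noncomputable def specRad {n : ℕ} (B : Matrix (Fin n) (Fin n) ℂ) : ℝ :=
  sSup ((fun z => ‖z‖) '' spectrum ℂ B)

/-- A matrix is elliptic if it is diagonalizable with all eigenvalues of modulus one. -/
def Elliptic {n : ℕ} (E : Matrix (Fin n) (Fin n) ℂ) : Prop :=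
  ∃ (M : Matrix (Fin n) (Fin n) ℂ) (t : Fin n → ℂ),
    IsUnit M.det ∧ (∀ i, ‖t i‖ = 1) ∧ E = M * Matrix.diagonal t * M⁻¹

/-- A matrix is hyperbolic if it is diagonalizable with all eigenvalues real and positive. -/
def Hyperbolic {n : ℕ} (H : Matrix (Fin n) (Fin n) ℂ) : Prop :=
  ∃ (M : Matrix (Fin n) (Fin n) ℂ) (t : Fin n → ℝ),
    IsUnit M.det ∧ (∀ i, 0 < t i) ∧ H = M * Matrix.diagonal (fun i => (t i : ℂ)) * M⁻¹

/-- A matrix is unipotent if all its eigenvalues are one, i.e. `U - 1` is nilpotent. -/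
def Unipotent {n : ℕ} (U : Matrix (Fin n) (Fin n) ℂ) : Prop :=
  IsNilpotent (U - 1)

/-- The Euclidean norm on `ℂⁿ`. -/
noncomputable def enorm {n : ℕ} (v : Fin n → ℂ) : ℝ :=
  Real.sqrt (∑ i, ‖v i‖ ^ 2)

-- initial segment lemma
lemma seg_mem_iff {n : ℕ} (S : Finset (Fin n))
    (hdc : ∀ ⦃j⦄, j ∈ S → ∀ ⦃i⦄, i ≤ j → i ∈ S) (x : Fin n) :
    x ∈ S ↔ (x : ℕ) < S.card := by
  constructor
  · intro hx
    have h : Finset.Iic x ⊆ S := fun i hi => hdc hx (Finset.mem_Iic.mp hi)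
    have := Finset.card_le_card h
    rw [Fin.card_Iic] at this
    omega
  · intro hx
    by_contra hxS
    have h : S ⊆ Finset.Iio x := by
      intro j hj
      rw [Finset.mem_Iio]
      by_contra hji
      exact hxS (hdc hj (le_of_not_gt hji))
    have := Finset.card_le_card h
    rw [Fin.card_Iio] at this
    omega

private lemma vecMul_eq_sum' {p : ℕ} (v : Fin p → ℂ) (B : Matrix (Fin p) (Fin p) ℂ) :
    Matrix.vecMul v B = ∑ a, v a • B a := by
  funext j
  simp [Matrix.vecMul, dotProduct, Finset.sum_apply]

/-- If all p×p minors of the first p columns vanish except the top one (which is nonzero),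
then rows below p vanish on the first p columns. -/
lemma aux_rows_zero {n p : ℕ} (hp : p ≤ n) (U : Matrix (Fin n) (Fin n) ℂ)
    (hdet : (U.submatrix (Fin.castLE hp) (Fin.castLE hp)).det ≠ 0)
    (hK0 : ∀ (K : Finset (Fin n)) (hK : K.card = p),
      K ≠ Finset.univ.filter (fun x : Fin n => (x : ℕ) < p) →
      (U.submatrix (K.orderEmbOfFin hK) (Fin.castLE hp)).det = 0)
    (j : Fin n) (hj : p ≤ (j : ℕ)) (i0 : Fin p) : U j (Fin.castLE hp i0) = 0 := by
  classical
  by_contra h0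
  set c : Fin p → Fin n := Fin.castLE hp with hc
  have hcinj : Function.Injective c := Fin.castLE_injective hp
  set B : Matrix (Fin p) (Fin p) ℂ := U.submatrix c c with hB
  have hBdet : IsUnit B.det := (Ne.isUnit hdet)
  set v : Fin p → ℂ := fun i => U j (c i) with hv
  set w : Fin p → ℂ := Matrix.vecMul v B⁻¹ with hw
  have hwB : Matrix.vecMul w B = v := by
    rw [hw, Matrix.vecMul_vecMul, Matrix.nonsing_inv_mul B hBdet, Matrix.vecMul_one]
  have hwne : ∃ i, w i ≠ 0 := by
    by_contra h
    push_neg at h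
    have : w = 0 := funext h
    rw [this, Matrix.zero_vecMul] at hwB
    exact h0 (congrFun hwB.symm i0)
  obtain ⟨i, hwi⟩ := hwne
  have hpos : 0 < p := i.pos
  -- the competing index set
  set K : Finset (Fin n) := insert j ((Finset.univ.erase i).image c) with hKdef
  have hjK : j ∉ (Finset.univ.erase i).image c := by
    intro hmem
    obtain ⟨m, _, hm⟩ := Finset.mem_image.mp hmem
    have h1 : (j : ℕ) = (m : ℕ) := by rw [← hm]; rfl
    have := m.isLt
    omega
  have hKcard : K.card = p := by
    rw [hKdef, Finset.card_insert_of_notMem hjK,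
      Finset.card_image_of_injective _ hcinj, Finset.card_erase_of_mem (Finset.mem_univ i),
      Finset.card_univ, Fintype.card_fin]
    omega
  have hKne : K ≠ Finset.univ.filter (fun x : Fin n => (x : ℕ) < p) := by
    intro h
    have : j ∈ Finset.univ.filter (fun x : Fin n => (x : ℕ) < p) := h ▸ Finset.mem_insert_self j _
    simp only [Finset.mem_filter] at this
    omega
  have hdet0 := hK0 K hKcard hKne
  set e := K.orderEmbOfFin hKcard with he
  set M : Matrix (Fin p) (Fin p) ℂ := U.submatrix e c with hM
  -- rows of matrices
  have hmemK : ∀ x ∈ K, (fun b => U x (c b)) ∈ Submodule.span ℂ (Set.range fun a => M a) := by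
    intro x hx
    have : x ∈ Set.range e := by rw [Finset.range_orderEmbOfFin]; exact hx
    obtain ⟨a, ha⟩ := this
    apply Submodule.subset_span
    exact ⟨a, by rw [hM]; funext bb; simp [Matrix.submatrix_apply, ha]⟩
  have hBrow : ∀ m : Fin p, B m ∈ Submodule.span ℂ (Set.range fun a => M a) := by
    intro m
    by_cases hm : m = i
    · -- B i = (w i)⁻¹ • (v - ∑_{m' ≠ i} w m' • B m')
      subst hm
      have hsum : v = w m • B m + ∑ a ∈ Finset.univ.erase m, w a • B a := by
        rw [← hwB, vecMul_eq_sum', ← Finset.add_sum_erase _ _ (Finset.mem_univ m)]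
      have hBi : B m = (w m)⁻¹ • (v - ∑ a ∈ Finset.univ.erase m, w a • B a) := by
        rw [hsum]
        simp [smul_smul, inv_mul_cancel₀ hwi]
      rw [hBi]
      apply Submodule.smul_mem
      apply Submodule.sub_mem
      · exact hmemK j (Finset.mem_insert_self _ _)
      · apply Submodule.sum_mem
        intro a ha
        apply Submodule.smul_mem
        have : c a ∈ K := by
          rw [hKdef]
          exact Finset.mem_insert_of_mem (Finset.mem_image_of_mem c ha)
        have := hmemK (c a) this
        convert this using 2
        rfl
    · have : c m ∈ K := by
        rw [hKdef]
        apply Finset.mem_insert_of_mem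
        exact Finset.mem_image_of_mem c (Finset.mem_erase.mpr ⟨hm, Finset.mem_univ m⟩)
      have := hmemK (c m) this
      convert this using 2
      rfl
  have htop : ⊤ ≤ Submodule.span ℂ (Set.range fun a => M a) := by
    intro x _
    have hx : x = ∑ a, (Matrix.vecMul x B⁻¹) a • B a := by
      rw [← vecMul_eq_sum', Matrix.vecMul_vecMul, Matrix.nonsing_inv_mul B hBdet,
        Matrix.vecMul_one]
    rw [hx]
    exact Submodule.sum_mem _ fun a _ => Submodule.smul_mem _ _ (hBrow a)
  have hcardeq : Fintype.card (Fin p) = Module.finrank ℂ (Fin p → ℂ) := by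
    simp [Module.finrank_fin_fun]
  have hli : LinearIndependent ℂ (fun a => M a) :=
    linearIndependent_of_top_le_span_of_card_eq_finrank htop hcardeq
  have hMu : IsUnit M := Matrix.linearIndependent_rows_iff_isUnit.mp hli
  have : M.det ≠ 0 := ((Matrix.isUnit_iff_isUnit_det M).mp hMu).ne_zero
  exact this hdet0

lemma aux_cols_zero {n p : ℕ} (hp : p ≤ n) (U : Matrix (Fin n) (Fin n) ℂ)
    (hU : U ∈ Matrix.unitaryGroup (Fin n) ℂ)
    (hz : ∀ l : Fin n, p ≤ (l : ℕ) → ∀ m : Fin p, U l (Fin.castLE hp m) = 0)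
    (i : Fin p) (j : Fin n) (hj : p ≤ (j : ℕ)) : U (Fin.castLE hp i) j = 0 := by
  classical
  set c : Fin p → Fin n := Fin.castLE hp with hc
  have hcinj : Function.Injective c := Fin.castLE_injective hp
  set B : Matrix (Fin p) (Fin p) ℂ := U.submatrix c c with hB
  have himg : Finset.univ.filter (fun x : Fin n => (x : ℕ) < p) = Finset.univ.image c := by
    ext x
    simp only [Finset.mem_filter, Finset.mem_univ, true_and, Finset.mem_image]
    constructor
    · intro hx; exact ⟨⟨(x : ℕ), hx⟩, Fin.ext rfl⟩
    · rintro ⟨m, _, rfl⟩; exact m.isLt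
  have hU1 : Uᴴ * U = 1 := by
    have := hU.1
    rwa [Matrix.star_eq_conjTranspose] at this
  have hU2 : U * Uᴴ = 1 := by
    have := hU.2
    rwa [Matrix.star_eq_conjTranspose] at this
  have hBB : Bᴴ * B = 1 := by
    ext a b
    have h := congrFun (congrFun hU1 (c a)) (c b)
    rw [Matrix.mul_apply] at h
    rw [← Finset.sum_filter_add_sum_filter_not Finset.univ (fun l : Fin n => (l : ℕ) < p)] at h
    have h2 : ∑ l ∈ Finset.univ.filter (fun l : Fin n => ¬ (l : ℕ) < p),
        Uᴴ (c a) l * U l (c b) = 0 := by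
      apply Finset.sum_eq_zero
      intro l hl
      rw [Finset.mem_filter] at hl
      rw [hz l (le_of_not_gt hl.2) b, mul_zero]
    rw [h2, add_zero, himg, Finset.sum_image (fun m _ m' _ h => hcinj h)] at h
    rw [Matrix.mul_apply]
    have hlhs : (∑ m : Fin p, Bᴴ a m * B m b) = ∑ m : Fin p, Uᴴ (c a) (c m) * U (c m) (c b) := by
      apply Finset.sum_congr rfl
      intro m _
      simp [hB, Matrix.conjTranspose_apply, Matrix.submatrix_apply]
    rw [hlhs, h]
    by_cases hab : a = b
    · subst hab; simp [Matrix.one_apply]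
    · rw [Matrix.one_apply_ne fun hcc => hab (hcinj hcc), Matrix.one_apply_ne hab]
  have hBB' : B * Bᴴ = 1 := mul_eq_one_comm.mp hBB
  -- row i of U has norm 1, and its first p entries already give norm 1
  have h := congrFun (congrFun hU2 (c i)) (c i)
  rw [Matrix.mul_apply] at h
  rw [← Finset.sum_filter_add_sum_filter_not Finset.univ (fun l : Fin n => (l : ℕ) < p)] at h
  have h1 : ∑ l ∈ Finset.univ.filter (fun l : Fin n => (l : ℕ) < p),
      U (c i) l * Uᴴ l (c i) = 1 := by
    rw [himg, Finset.sum_image (fun m _ m' _ h => hcinj h)]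
    have h3 := congrFun (congrFun hBB' i) i
    rw [Matrix.mul_apply] at h3
    rw [Matrix.one_apply_eq] at h3
    rw [← h3]
    apply Finset.sum_congr rfl
    intro m _
    simp [hB, Matrix.conjTranspose_apply, Matrix.submatrix_apply]
  rw [h1, Matrix.one_apply_eq] at h
  have h4 : ∑ l ∈ Finset.univ.filter (fun l : Fin n => ¬ (l : ℕ) < p),
      U (c i) l * Uᴴ l (c i) = 0 := by
    have := h
    linear_combination this - (1 : ℂ)
  have h5 : ∑ l ∈ Finset.univ.filter (fun l : Fin n => ¬ (l : ℕ) < p),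
      (Complex.normSq (U (c i) l) : ℂ) = 0 := by
    rw [← h4]
    apply Finset.sum_congr rfl
    intro l _
    simp [Matrix.conjTranspose_apply, Complex.mul_conj]
  have h6 : ∑ l ∈ Finset.univ.filter (fun l : Fin n => ¬ (l : ℕ) < p),
      Complex.normSq (U (c i) l) = 0 := by
    have := h5
    push_cast at this
    exact_mod_cast this
  have h7 : Complex.normSq (U (c i) j) = 0 := by
    have hjf : j ∈ Finset.univ.filter (fun l : Fin n => ¬ (l : ℕ) < p) := by
      simp [Finset.mem_filter, not_lt, hj]
    exact (Finset.sum_eq_zero_iff_of_nonneg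
      (fun l _ => Complex.normSq_nonneg _)).mp h6 j hjf
  exact Complex.normSq_eq_zero.mp h7


/-- Let `D = μ₁ I_{n₁} ⊕ ⋯ ⊕ μ_k I_{n_k}` with `μ₁ > ⋯ > μ_k ≥ 0` (encoded by a monotone
surjective block-index map `b : Fin n → Fin k` and a strictly antitone nonnegative `μ`),
and let `U` be unitary such that for each `t ∈ [k−1]`, with `p = n₁ + ⋯ + n_t`,
`det(U[p]) ≠ 0` and `det(U[K,[p]]) = 0` for every `K` with `|K| = p`, `K ≠ [p]`.
Then `U` is block diagonal conforming to the blocks of `D` (with unitary diagonal blocks),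
and consequently `U D Uᴴ = D`. -/
theorem unitary_block_diagonal_of_minors {n k : ℕ}
    (b : Fin n → Fin k) (hb : Monotone b) (hbs : Function.Surjective b)
    (μ : Fin k → ℝ) (hμ : StrictAnti μ) (hμ0 : ∀ t, 0 ≤ μ t)
    (U : Matrix (Fin n) (Fin n) ℂ) (hU : U ∈ Matrix.unitaryGroup (Fin n) ℂ)
    (hcard : ∀ t : Fin k, (Finset.univ.filter fun i => b i ≤ t).card ≤ n)
    (hminors : ∀ t : Fin k, (t : ℕ) + 1 < k →
      (U.submatrix (Fin.castLE (hcard t)) (Fin.castLE (hcard t))).det ≠ 0 ∧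
      ∀ (K : Finset (Fin n))
        (hK : K.card = (Finset.univ.filter fun i => b i ≤ t).card),
        K ≠ Finset.univ.filter (fun i => b i ≤ t) →
        (U.submatrix (K.orderEmbOfFin hK) (Fin.castLE (hcard t))).det = 0) :
    (∀ i j : Fin n, b i ≠ b j → U i j = 0) ∧
      U * Matrix.diagonal (fun i => (μ (b i) : ℂ)) * Uᴴ =
        Matrix.diagonal (fun i => (μ (b i) : ℂ)) := by
  classical
  have hseg : ∀ (t : Fin k) (x : Fin n),
      b x ≤ t ↔ (x : ℕ) < (Finset.univ.filter fun i => b i ≤ t).card := by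
    intro t x
    have h := seg_mem_iff (Finset.univ.filter fun i => b i ≤ t)
      (fun j hj i hij => by
        simp only [Finset.mem_filter, Finset.mem_univ, true_and] at hj ⊢
        exact le_trans (hb hij) hj) x
    simpa using h
  have hfeq : ∀ t : Fin k,
      (Finset.univ.filter fun i => b i ≤ t) =
      Finset.univ.filter
        (fun x : Fin n => (x : ℕ) < (Finset.univ.filter fun i => b i ≤ t).card) := by
    intro t
    ext x
    simp only [Finset.mem_filter, Finset.mem_univ, true_and]
    exact hseg t x
  have step1 : ∀ t : Fin k, (t : ℕ) + 1 < k → ∀ j : Fin n,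
      (Finset.univ.filter fun i => b i ≤ t).card ≤ (j : ℕ) →
      ∀ m : Fin (Finset.univ.filter fun i => b i ≤ t).card,
        U j (Fin.castLE (hcard t) m) = 0 := by
    intro t ht j hj m
    obtain ⟨hdet, hK0⟩ := hminors t ht
    refine aux_rows_zero (hcard t) U hdet ?_ j hj m
    intro K hK hKne
    exact hK0 K hK (fun h => hKne (h.trans (hfeq t)))
  have hzero : ∀ i j : Fin n, b i ≠ b j → U i j = 0 := by
    intro i j hne
    rcases lt_or_gt_of_ne hne with hlt | hgt
    · -- b i < b j : use unitarity transfer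
      set t := b i with hti
      have h1 : (b i : ℕ) < (b j : ℕ) := hlt
      have h2 := (b j).isLt
      have ht : (t : ℕ) + 1 < k := by omega
      have hiin : (i : ℕ) < (Finset.univ.filter fun x => b x ≤ t).card :=
        (hseg t i).mp le_rfl
      have hjout : (Finset.univ.filter fun x => b x ≤ t).card ≤ (j : ℕ) :=
        le_of_not_gt (fun hc => absurd ((hseg t j).mpr hc) (not_le.mpr hlt))
      have hres := aux_cols_zero (hcard t) U hU (step1 t ht) ⟨(i : ℕ), hiin⟩ j hjout
      have hcast : Fin.castLE (hcard t) ⟨(i : ℕ), hiin⟩ = i := Fin.ext rfl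
      rw [← hcast]
      exact hres
    · -- b j < b i : direct zero below the block
      set t := b j with htj
      have h1 : (b j : ℕ) < (b i : ℕ) := hgt
      have h2 := (b i).isLt
      have ht : (t : ℕ) + 1 < k := by omega
      have hjin : (j : ℕ) < (Finset.univ.filter fun x => b x ≤ t).card :=
        (hseg t j).mp le_rfl
      have hiout : (Finset.univ.filter fun x => b x ≤ t).card ≤ (i : ℕ) :=
        le_of_not_gt (fun hc => absurd ((hseg t i).mpr hc) (not_le.mpr hgt))
      have hres := step1 t ht i hiout ⟨(j : ℕ), hjin⟩
      have hcast : Fin.castLE (hcard t) ⟨(j : ℕ), hjin⟩ = j := Fin.ext rfl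
      rw [← hcast]
      exact hres
  refine ⟨hzero, ?_⟩
  have hcomm : U * Matrix.diagonal (fun i => (μ (b i) : ℂ)) =
      Matrix.diagonal (fun i => (μ (b i) : ℂ)) * U := by
    ext i j
    rw [Matrix.mul_diagonal, Matrix.diagonal_mul]
    by_cases hbe : b i = b j
    · rw [hbe, mul_comm]
    · rw [hzero i j hbe, zero_mul, mul_zero]
  have hU2 : U * Uᴴ = 1 := by
    have := hU.2
    rwa [Matrix.star_eq_conjTranspose] at this
  rw [hcomm, Matrix.mul_assoc, hU2, mul_one]
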